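/- arXiv:1803.11019 — 6 statements merged into one kernel-verified Lean document; each statement's English description precedes it below -/
import Mathlib

section
/- Let X be a real Banach space, Y a real normed space, D ⊆ X nonempty, F : D → Y a map, and R : X → ℝ. Let f† ∈ D and f* ∈ X* satisfy R(f) ≥ R(f†) + ⟨f*, f − f†⟩ for all f ∈ X, and write Δ(f) := R(f) − R(f†) − ⟨f*, f − f†⟩. Let r > 1, r' := r/(r−1), C_Δ > 0 and assume C_Δ ‖f − f†‖_X^r ≤ Δ(f) for all f ∈ D. Let t ≥ 1, let J be a nonempty index set, P_j : X* → X* maps for j ∈ J, κ, σ : J → (0,∞), and γ ≥ 0, such that for every j ∈ J: (a) ‖f* − P_j f*‖_{X*} ≤ κ(j), and (b) for every f ∈ D with ‖f† − f‖_X ≤ ((2/C_Δ)‖f*‖_{X*})^{r'/r} one has ⟨P_j f*, f† − f⟩ ≤ σ(j) ‖F(f†) − F(f)‖_Y + γ κ(j) ‖f† − f‖_X. Then for every f ∈ D, ⟨f*, f† − f⟩ ≤ (1/2) Δ(f) + ψ(‖F(f†) − F(f)‖_Y^t), where ψ(τ) := inf_{j∈J} [ σ(j) τ^{1/t} + (1/r')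 (2/C_Δ)^{r'/r} (1+γ)^{r'} κ(j)^{r'} ]. -/
/-!
Write `x = f† - f` and `ρ = ((2/C_Δ)‖f*‖)^{r'/r}`. If `‖x‖ > ρ`, then `‖f*‖ ≤ (C_Δ/2)‖x‖^{r-1}`,
so `⟨f*, x⟩ ≤ (C_Δ/2)‖x‖^r ≤ Δ(f)/2` and the infimum term is nonnegative. If `‖x‖ ≤ ρ`,
(a) and (b) give `⟨f*, x⟩ ≤ σ(j)‖F(f†) - F(f)‖ + (1+γ)κ(j)‖x‖`, and Young's inequality with
weight `C_Δ r/2` splits the last product into `(C_Δ/2)‖x‖^r ≤ Δ(f)/2` and the `κ(j)^{r'}` term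
of `ψ`. Both bounds hold for every `j`, hence for the infimum.
-/

open Real

namespace Real

theorem young_inequality_of_nonneg_weighted {a b p q ε : ℝ} (ha : 0 ≤ a) (hb : 0 ≤ b)
    (hpq : p.HolderConjugate q) (hε : 0 < ε) :
    a * b ≤ ε * a ^ p / p + ε ^ (-(q / p)) * b ^ q / q := by
  have hε' : 0 ≤ ε := hε.le
  have young := young_inequality_of_nonneg (mul_nonneg (rpow_nonneg hε' (1 / p)) ha)
    (mul_nonneg (rpow_nonneg hε' (-(1 / p))) hb) hpq
  have hprod : ε ^ (1 / p) * a * (ε ^ (-(1 / p)) * b) = a * b := by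
    rw [rpow_neg hε']
    field_simp
  rwa [hprod, mul_rpow (rpow_nonneg hε' _) ha, mul_rpow (rpow_nonneg hε' _) hb,
    ← rpow_mul hε', ← rpow_mul hε', one_div_mul_cancel hpq.ne_zero, rpow_one,
    neg_mul, one_div_mul_eq_div] at young

theorem mul_le_half_mul_rpow_add {a b p q C : ℝ} (ha : 0 ≤ a) (hb : 0 ≤ b)
    (hpq : p.HolderConjugate q) (hC : 0 < C) :
    a * b ≤ C / 2 * a ^ p + 1 / q * (2 / C) ^ (q / p) * b ^ q := by
  have hp := hpq.pos
  have hq := hpq.symm.pos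
  have hweight : (C * p / 2) ^ (-(q / p)) ≤ (2 / C) ^ (q / p) := by
    rw [rpow_neg (by positivity), ← inv_rpow (by positivity), inv_div]
    gcongr
    exact le_mul_of_one_le_right hC.le hpq.lt.le
  calc a * b ≤ C * p / 2 * a ^ p / p + (C * p / 2) ^ (-(q / p)) * b ^ q / q :=
        young_inequality_of_nonneg_weighted ha hb hpq (by positivity)
    _ ≤ C * p / 2 * a ^ p / p + (2 / C) ^ (q / p) * b ^ q / q := by gcongr
    _ = C / 2 * a ^ p + 1 / q * (2 / C) ^ (q / p) * b ^ q := by field_simp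

end Real

namespace ContinuousLinearMap

variable {X : Type*} [NormedAddCommGroup X] [NormedSpace ℝ X]

theorem apply_le_half_mul_norm_rpow (φ : X →L[ℝ] ℝ) {x : X} {p q C : ℝ}
    (hpq : p.HolderConjugate q) (hC : 0 < C) (hx : ((2 / C) * ‖φ‖) ^ (q / p) ≤ ‖x‖) :
    φ x ≤ C / 2 * ‖x‖ ^ p := by
  have hbase : 0 ≤ (2 / C) * ‖φ‖ := by positivity
  have hexp : q / p * (p - 1) = 1 := by
    rw [div_mul_eq_mul_div, mul_comm, hpq.sub_one_mul_conj, div_self hpq.ne_zero]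
  have hφ : (2 / C) * ‖φ‖ ≤ ‖x‖ ^ (p - 1) := by
    simpa only [← rpow_mul hbase, hexp, rpow_one] using
      rpow_le_rpow (rpow_nonneg hbase _) hx hpq.sub_one_pos.le
  calc φ x ≤ ‖φ‖ * ‖x‖ := (Real.le_norm_self _).trans (φ.le_opNorm x)
    _ = C / 2 * ((2 / C) * ‖φ‖) * ‖x‖ := by field_simp
    _ ≤ C / 2 * ‖x‖ ^ (p - 1) * ‖x‖ := by gcongr
    _ = C / 2 * ‖x‖ ^ p := by
      rw [mul_assoc, ← rpow_add_one' (norm_nonneg x) (by simp [hpq.ne_zero]), sub_add_cancel]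

theorem apply_le_of_norm_sub_le (φ ψ : X →L[ℝ] ℝ) {x : X} {κ γ s : ℝ}
    (hφψ : ‖φ - ψ‖ ≤ κ) (hψ : ψ x ≤ s + γ * κ * ‖x‖) :
    φ x ≤ s + (1 + γ) * κ * ‖x‖ := by
  have hdiff : (φ - ψ) x ≤ κ * ‖x‖ :=
    ((Real.le_norm_self _).trans ((φ - ψ).le_opNorm x)).trans
      (mul_le_mul_of_nonneg_right hφψ (norm_nonneg x))
  rw [sub_apply] at hdiff
  linarith

theorem apply_le_half_mul_norm_rpow_add (φ ψ : X →L[ℝ] ℝ) {x : X} {p q C κ γ s : ℝ}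
    (hpq : p.HolderConjugate q) (hC : 0 < C) (hκ : 0 ≤ κ) (hγ : 0 ≤ γ) (hs : 0 ≤ s)
    (hφψ : ‖φ - ψ‖ ≤ κ)
    (hψ : ‖x‖ ≤ ((2 / C) * ‖φ‖) ^ (q / p) → ψ x ≤ s + γ * κ * ‖x‖) :
    φ x ≤ C / 2 * ‖x‖ ^ p + (s + 1 / q * (2 / C) ^ (q / p) * (1 + γ) ^ q * κ ^ q) := by
  rcases le_or_gt ‖x‖ (((2 / C) * ‖φ‖) ^ (q / p)) with hsmall | hlarge
  · calc φ x ≤ s + ‖x‖ * ((1 + γ) * κ) := by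
          linarith [φ.apply_le_of_norm_sub_le ψ hφψ (hψ hsmall)]
      _ ≤ s + (C / 2 * ‖x‖ ^ p + 1 / q * (2 / C) ^ (q / p) * ((1 + γ) * κ) ^ q) := by
          gcongr
          exact mul_le_half_mul_rpow_add (norm_nonneg x) (by positivity) hpq hC
      _ = C / 2 * ‖x‖ ^ p + (s + 1 / q * (2 / C) ^ (q / p) * (1 + γ) ^ q * κ ^ q) := by
          rw [mul_rpow (by positivity) hκ]
          ring
  · have hq := hpq.symm.pos
    have hrest : 0 ≤ s + 1 / q * (2 / C) ^ (q / p) * (1 + γ) ^ q * κ ^ q := by positivity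
    linarith [φ.apply_le_half_mul_norm_rpow hpq hC hlarge.le]

end ContinuousLinearMap

theorem stmt_6_general
    {X Y : Type*} [NormedAddCommGroup X] [NormedSpace ℝ X]
    [NormedAddCommGroup Y]
    (D : Set X) (F : X → Y) (R : X → ℝ)
    (fdag : X) (fstar : X →L[ℝ] ℝ)
    (r : ℝ) (hr : 1 < r) (CΔ : ℝ) (hCΔ : 0 < CΔ)
    (hbreg : ∀ f ∈ D, CΔ * ‖f - fdag‖ ^ r ≤ R f - R fdag - fstar (f - fdag))
    (t : ℝ) (ht : 1 ≤ t)
    {J : Type*} [Nonempty J] (P : J → (X →L[ℝ] ℝ) → (X →L[ℝ] ℝ))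
    (κ σ : J → ℝ) (hκ : ∀ j, 0 < κ j) (hσ : ∀ j, 0 < σ j) (γ : ℝ) (hγ : 0 ≤ γ)
    (ha : ∀ j, ‖fstar - P j fstar‖ ≤ κ j)
    (hb : ∀ j, ∀ f ∈ D,
      ‖fdag - f‖ ≤ ((2 / CΔ) * ‖fstar‖) ^ ((r / (r - 1)) / r) →
      (P j fstar) (fdag - f) ≤ σ j * ‖F fdag - F f‖ + γ * κ j * ‖fdag - f‖) :
    ∀ f ∈ D, fstar (fdag - f) ≤
      (1 / 2) * (R f - R fdag - fstar (f - fdag)) +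
        ⨅ j : J, (σ j * (‖F fdag - F f‖ ^ t) ^ (1 / t) +
          (1 / (r / (r - 1))) * (2 / CΔ) ^ ((r / (r - 1)) / r) *
            (1 + γ) ^ (r / (r - 1)) * κ j ^ (r / (r - 1))) := by
  intro f hf
  have hpq : r.HolderConjugate (r / (r - 1)) := .conjExponent hr
  have hΔ : CΔ * ‖fdag - f‖ ^ r ≤ R f - R fdag - fstar (f - fdag) :=
    norm_sub_rev f fdag ▸ hbreg f hf
  have hdist : (‖F fdag - F f‖ ^ t) ^ (1 / t) = ‖F fdag - F f‖ := by
    rw [one_div, rpow_rpow_inv (norm_nonneg _) (by linarith)]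
  rw [← sub_le_iff_le_add']
  refine le_ciInf fun j => ?_
  have hj := fstar.apply_le_half_mul_norm_rpow_add (P j fstar) hpq hCΔ (hκ j).le hγ
    (mul_nonneg (hσ j).le (norm_nonneg (F fdag - F f))) (ha j) (hb j f hf)
  rw [hdist]
  linarith

/-- Theorem 3.1: abstract strategy for the verification of variational source conditions in
Banach spaces. Under the lower Bregman-distance bound, the subgradient smoothness condition (a)
and the ill-posedness condition (b), the variational source condition holds with the index
function `ψ(τ) = inf_j [σ(j) τ^{1/t} + (1/r') (2/C_Δ)^{r'/r} (1+γ)^{r'} κ(j)^{r'}]`, where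
`r' = r/(r−1)` and `Δ(f) = R(f) − R(f†) − ⟨f*, f − f†⟩`. -/
theorem stmt_6
    {X Y : Type*} [NormedAddCommGroup X] [NormedSpace ℝ X] [CompleteSpace X]
    [NormedAddCommGroup Y] [NormedSpace ℝ Y]
    (D : Set X) (hD : D.Nonempty) (F : X → Y) (R : X → ℝ)
    (fdag : X) (hfdag : fdag ∈ D) (fstar : X →L[ℝ] ℝ)
    (hsubgrad : ∀ f : X, R fdag + fstar (f - fdag) ≤ R f)
    (r : ℝ) (hr : 1 < r) (CΔ : ℝ) (hCΔ : 0 < CΔ)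
    (hbreg : ∀ f ∈ D, CΔ * ‖f - fdag‖ ^ r ≤ R f - R fdag - fstar (f - fdag))
    (t : ℝ) (ht : 1 ≤ t)
    {J : Type*} [Nonempty J] (P : J → (X →L[ℝ] ℝ) → (X →L[ℝ] ℝ))
    (κ σ : J → ℝ) (hκ : ∀ j, 0 < κ j) (hσ : ∀ j, 0 < σ j) (γ : ℝ) (hγ : 0 ≤ γ)
    (ha : ∀ j, ‖fstar - P j fstar‖ ≤ κ j)
    (hb : ∀ j, ∀ f ∈ D,
      ‖fdag - f‖ ≤ ((2 / CΔ) * ‖fstar‖) ^ ((r / (r - 1)) / r) →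
      (P j fstar) (fdag - f) ≤ σ j * ‖F fdag - F f‖ + γ * κ j * ‖fdag - f‖) :
    ∀ f ∈ D, fstar (fdag - f) ≤
      (1 / 2) * (R f - R fdag - fstar (f - fdag)) +
        ⨅ j : J, (σ j * (‖F fdag - F f‖ ^ t) ^ (1 / t) +
          (1 / (r / (r - 1))) * (2 / CΔ) ^ ((r / (r - 1)) / r) *
            (1 + γ) ^ (r / (r - 1)) * κ j ^ (r / (r - 1))) :=
  stmt_6_general D F R fdag fstar r hr CΔ hCΔ hbreg t ht P κ σ hκ hσ γ hγ ha hb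
end

section
/- Let X and Y be real Hilbert spaces, T : X → Y a bounded linear operator, (f_k)_{k∈ℕ} an orthonormal family in X, (g_k)_{k∈ℕ} an orthonormal family in Y, and (σ_k)_{k∈ℕ} positive reals with T f_k = σ_k g_k and T* g_k = σ_k f_k for all k. For f† ∈ X and j ∈ ℕ set P_j f† := ∑_{k=0}^{j} ⟨f†, f_k⟩ f_k. Then for every h ∈ X, ⟨P_j f†, h⟩ ≤ ( ∑_{k=0}^{j} ⟨f†, f_k⟩² / σ_k² )^{1/2} ‖T h‖_Y. -/
open scoped RealInnerProductSpace

/-- Example 3.2: for a bounded linear operator `T` between Hilbert spaces with singular system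
`(f_k, g_k, σ_k)`, the projection `P_j f† = ∑_{k≤j} ⟨f†, f_k⟩ f_k` satisfies
`⟨P_j f†, h⟩ ≤ (∑_{k≤j} ⟨f†, f_k⟩²/σ_k²)^{1/2} ‖T h‖`. -/
theorem stmt_8 {X Y : Type*}
    [NormedAddCommGroup X] [InnerProductSpace ℝ X] [CompleteSpace X]
    [NormedAddCommGroup Y] [InnerProductSpace ℝ Y] [CompleteSpace Y]
    (T : X →L[ℝ] Y) (f : ℕ → X) (g : ℕ → Y) (σ : ℕ → ℝ)
    (hf : Orthonormal ℝ f) (hg : Orthonormal ℝ g) (hσ : ∀ k, 0 < σ k)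
    (hT : ∀ k, T (f k) = σ k • g k)
    (hTadj : ∀ k, (ContinuousLinearMap.adjoint T) (g k) = σ k • f k)
    (fdag : X) (j : ℕ) (h : X) :
    ⟪∑ k ∈ Finset.range (j + 1), ⟪fdag, f k⟫ • f k, h⟫ ≤
      Real.sqrt (∑ k ∈ Finset.range (j + 1), ⟪fdag, f k⟫ ^ 2 / σ k ^ 2) * ‖T h‖ := by
  have key : ∀ k, ⟪f k, h⟫ = (σ k)⁻¹ * ⟪g k, T h⟫ := by
    intro k
    have h1 : ⟪g k, T h⟫ = ⟪(ContinuousLinearMap.adjoint T) (g k), h⟫ :=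
      (ContinuousLinearMap.adjoint_inner_left T h (g k)).symm
    rw [h1, hTadj k, real_inner_smul_left, inv_mul_cancel_left₀ (hσ k).ne']
  have expand : ⟪∑ k ∈ Finset.range (j + 1), ⟪fdag, f k⟫ • f k, h⟫
      = ∑ k ∈ Finset.range (j + 1), (⟪fdag, f k⟫ * (σ k)⁻¹) * ⟪g k, T h⟫ := by
    rw [sum_inner]
    refine Finset.sum_congr rfl fun k _ => ?_
    rw [real_inner_smul_left, key k]; ring
  rw [expand]
  have cs : ∑ k ∈ Finset.range (j + 1), (⟪fdag, f k⟫ * (σ k)⁻¹) * ⟪g k, T h⟫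
      ≤ Real.sqrt (∑ k ∈ Finset.range (j + 1), (⟪fdag, f k⟫ * (σ k)⁻¹) ^ 2)
        * Real.sqrt (∑ k ∈ Finset.range (j + 1), ⟪g k, T h⟫ ^ 2) := by
    calc ∑ k ∈ Finset.range (j + 1), (⟪fdag, f k⟫ * (σ k)⁻¹) * ⟪g k, T h⟫
        ≤ |∑ k ∈ Finset.range (j + 1), (⟪fdag, f k⟫ * (σ k)⁻¹) * ⟪g k, T h⟫| := le_abs_self _
      _ ≤ _ := by
          have sq := Finset.sum_mul_sq_le_sq_mul_sq (Finset.range (j + 1))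
            (fun k => ⟪fdag, f k⟫ * (σ k)⁻¹) (fun k => ⟪g k, T h⟫)
          have h1 : 0 ≤ ∑ k ∈ Finset.range (j + 1), (⟪fdag, f k⟫ * (σ k)⁻¹) ^ 2 :=
            Finset.sum_nonneg fun k _ => sq_nonneg _
          have h2 : 0 ≤ ∑ k ∈ Finset.range (j + 1), ⟪g k, T h⟫ ^ 2 :=
            Finset.sum_nonneg fun k _ => sq_nonneg _
          rw [← Real.sqrt_mul h1]
          rw [← Real.sqrt_sq_eq_abs]
          exact Real.sqrt_le_sqrt sq
  refine cs.trans ?_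
  have heq : ∑ k ∈ Finset.range (j + 1), (⟪fdag, f k⟫ * (σ k)⁻¹) ^ 2
      = ∑ k ∈ Finset.range (j + 1), ⟪fdag, f k⟫ ^ 2 / σ k ^ 2 := by
    refine Finset.sum_congr rfl fun k _ => ?_
    field_simp
  rw [heq]
  gcongr
  · -- Bessel
    have bessel := hg.sum_inner_products_le (T h) (s := Finset.range (j + 1))
    have hsq : ∑ k ∈ Finset.range (j + 1), ⟪g k, T h⟫ ^ 2
        = ∑ k ∈ Finset.range (j + 1), ‖(⟪g k, T h⟫ : ℝ)‖ ^ 2 := by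
      refine Finset.sum_congr rfl fun k _ => ?_
      rw [Real.norm_eq_abs, sq_abs]
    calc Real.sqrt (∑ k ∈ Finset.range (j + 1), ⟪g k, T h⟫ ^ 2)
        ≤ Real.sqrt (‖T h‖ ^ 2) := by
          apply Real.sqrt_le_sqrt
          rw [hsq]
          exact bessel
      _ = ‖T h‖ := Real.sqrt_sq (norm_nonneg _)
end

section
/- Let d ∈ ℕ, p ∈ (1,∞), q₁ ∈ (1,∞), q₂ ∈ [1,∞), s₁, s₂ ∈ ℝ and r > 0. Set s₃ := −s₁ + (s₂ − s₁)(q₁ − 1), q₃ := q₂/(q₁ − 1) and p' := p/(p − 1). Let λ = (λ_{j,l})_{j,l∈ℕ} be a double sequence of reals with ‖λ‖_{s₁,p,q₁} < ∞ and ‖λ‖_{s₂,p,q₂} < ∞, and define μ = (μ_{j,l}) by μ_{j,l} := ‖λ‖_{s₁,p,q₁}^{r−q₁} · 2^{j s₁ q₁} 2^{j d (1/2 − 1/p) q₁} ( ∑_{m} |λ_{j,m}|^p )^{(q₁−p)/p} · sgn(λ_{j,l}) |λ_{j,l}|^{p−1}, with the convention μ_{j,l} := 0 whenever λ_{j,l}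 = 0. Then ‖μ‖_{s₃,p',q₃} = ‖λ‖_{s₁,p,q₁}^{r−q₁} · ‖λ‖_{s₂,p,q₂}^{q₁−1}. -/
open scoped ENNReal

/-- The Besov sequence norm
`‖λ‖_{s,p,q} = (∑_j 2^{jsq} 2^{jd(1/2−1/p)q} (∑_l |λ_{j,l}|^p)^{q/p})^{1/q}`,
with values in `[0,∞]`. -/
noncomputable def besovNorm (d : ℕ) (s p q : ℝ) (lam : ℕ → ℕ → ℝ) : ℝ≥0∞ :=
  (∑' j : ℕ, ((2 : ℝ≥0∞) ^ ((j : ℝ) * s * q) *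
      (2 : ℝ≥0∞) ^ ((j : ℝ) * d * (1 / 2 - 1 / p) * q) *
      (∑' l : ℕ, (ENNReal.ofReal |lam j l|) ^ p) ^ (q / p))) ^ (1 / q)

lemma two_rpow_ne_zero (x : ℝ) : (2 : ℝ≥0∞) ^ x ≠ 0 :=
  (ENNReal.rpow_pos (by norm_num) (by norm_num)).ne'

lemma two_rpow_ne_top (x : ℝ) : (2 : ℝ≥0∞) ^ x ≠ ⊤ := by
  simp [ENNReal.rpow_eq_top_iff]

lemma ofReal_two_rpow (x : ℝ) : ENNReal.ofReal ((2:ℝ) ^ x) = (2 : ℝ≥0∞) ^ x := by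
  rw [← ENNReal.ofReal_rpow_of_pos (by norm_num)]
  norm_num

lemma besov_zero (d : ℕ) (s p q : ℝ) (hp : 0 < p) (hq : 0 < q) (lam : ℕ → ℕ → ℝ)
    (h : ∀ j l, lam j l = 0) : besovNorm d s p q lam = 0 := by
  rw [besovNorm]
  have : ∀ j : ℕ, (∑' l : ℕ, (ENNReal.ofReal |lam j l|) ^ p) = 0 := by
    intro j
    simp [h, ENNReal.zero_rpow_of_pos hp]
  have hT : (∑' j : ℕ, ((2 : ℝ≥0∞) ^ ((j : ℝ) * s * q) *
      (2 : ℝ≥0∞) ^ ((j : ℝ) * d * (1 / 2 - 1 / p) * q) *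
      (∑' l : ℕ, (ENNReal.ofReal |lam j l|) ^ p) ^ (q / p))) = 0 := by
    apply ENNReal.tsum_eq_zero.mpr
    intro j
    rw [this j, ENNReal.zero_rpow_of_pos (div_pos hq hp), mul_zero]
  rw [hT, ENNReal.zero_rpow_of_pos (show (0:ℝ) < 1/q by positivity)]

lemma besov_eq_zero_imp (d : ℕ) (s p q : ℝ) (hp : 0 < p) (hq : 0 < q) (lam : ℕ → ℕ → ℝ)
    (h : besovNorm d s p q lam = 0) : ∀ j l, lam j l = 0 := by
  rw [besovNorm, ENNReal.rpow_eq_zero_iff] at h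
  have hT : (∑' j : ℕ, ((2 : ℝ≥0∞) ^ ((j : ℝ) * s * q) *
      (2 : ℝ≥0∞) ^ ((j : ℝ) * d * (1 / 2 - 1 / p) * q) *
      (∑' l : ℕ, (ENNReal.ofReal |lam j l|) ^ p) ^ (q / p))) = 0 := by
    rcases h with ⟨h, _⟩ | ⟨_, h⟩
    · exact h
    · exact absurd h (show (0:ℝ) < 1/q by positivity).asymm
  intro j l
  have hterm := (ENNReal.tsum_eq_zero.mp hT) j
  rcases mul_eq_zero.mp hterm with h' | h'
  · rcases mul_eq_zero.mp h' with h'' | h''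
    · exact absurd h'' (two_rpow_ne_zero _)
    · exact absurd h'' (two_rpow_ne_zero _)
  · rw [ENNReal.rpow_eq_zero_iff] at h'
    have hA : (∑' l : ℕ, (ENNReal.ofReal |lam j l|) ^ p) = 0 := by
      rcases h' with ⟨h', _⟩ | ⟨_, h'⟩
      · exact h'
      · exact absurd h' (by positivity : (0:ℝ) < q / p).asymm
    have := (ENNReal.tsum_eq_zero.mp hA) l
    rw [ENNReal.rpow_eq_zero_iff] at this
    rcases this with ⟨h'', _⟩ | ⟨h'', _⟩
    · have := ENNReal.ofReal_eq_zero.mp h''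
      have := abs_nonneg (lam j l)
      have : |lam j l| = 0 := le_antisymm (by assumption) (abs_nonneg _)
      exact abs_eq_zero.mp this
    · exact absurd h'' ENNReal.ofReal_ne_top

lemma besov_inner_ne_top (d : ℕ) (s p q : ℝ) (hp : 0 < p) (hq : 0 < q) (lam : ℕ → ℕ → ℝ)
    (h : besovNorm d s p q lam < ⊤) (j : ℕ) :
    (∑' l : ℕ, (ENNReal.ofReal |lam j l|) ^ p) ≠ ⊤ := by
  intro hA
  rw [besovNorm] at h
  have hterm : ((2 : ℝ≥0∞) ^ ((j : ℝ) * s * q) *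
      (2 : ℝ≥0∞) ^ ((j : ℝ) * d * (1 / 2 - 1 / p) * q) *
      (∑' l : ℕ, (ENNReal.ofReal |lam j l|) ^ p) ^ (q / p)) = ⊤ := by
    rw [hA, ENNReal.top_rpow_of_pos (by positivity),
      ENNReal.mul_top (mul_ne_zero (two_rpow_ne_zero _) (two_rpow_ne_zero _))]
  have hT : (∑' j : ℕ, ((2 : ℝ≥0∞) ^ ((j : ℝ) * s * q) *
      (2 : ℝ≥0∞) ^ ((j : ℝ) * d * (1 / 2 - 1 / p) * q) *
      (∑' l : ℕ, (ENNReal.ofReal |lam j l|) ^ p) ^ (q / p))) = ⊤ :=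
    eq_top_iff.mpr (hterm ▸ ENNReal.le_tsum j)
  rw [hT, ENNReal.top_rpow_of_pos (by positivity)] at h
  exact (lt_irrefl _ h)
lemma two_rpow_mul (s t : ℝ) : (2:ℝ≥0∞) ^ s * (2:ℝ≥0∞) ^ t = (2:ℝ≥0∞) ^ (s + t) :=
  (ENNReal.rpow_add s t (by norm_num) (by norm_num)).symm

lemma shuffle (c z : ℝ≥0∞) (u v α β x y : ℝ) (h : u + v + (α + β) = x + y) :
    (2:ℝ≥0∞)^u * (2:ℝ≥0∞)^v * (c * (2:ℝ≥0∞)^α * (2:ℝ≥0∞)^β * z)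
      = c * ((2:ℝ≥0∞)^x * (2:ℝ≥0∞)^y * z) := by
  calc (2:ℝ≥0∞)^u * (2:ℝ≥0∞)^v * (c * (2:ℝ≥0∞)^α * (2:ℝ≥0∞)^β * z)
      = c * (((2:ℝ≥0∞)^u * (2:ℝ≥0∞)^v) * ((2:ℝ≥0∞)^α * (2:ℝ≥0∞)^β)) * z := by ring
    _ = c * (2:ℝ≥0∞)^(u + v + (α + β)) * z := by rw [two_rpow_mul, two_rpow_mul, two_rpow_mul]
    _ = c * (2:ℝ≥0∞)^(x + y) * z := by rw [h]
    _ = c * ((2:ℝ≥0∞)^x * (2:ℝ≥0∞)^y * z) := by rw [← two_rpow_mul]; ring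

lemma shuffle' (c A : ℝ≥0∞) (hA0 : A ≠ 0) (hAt : A ≠ ⊤) (u v α β γ δ x y w : ℝ)
    (h2 : u + v + (α + β) = x + y) (hA : γ + δ = w) :
    (2:ℝ≥0∞)^u * (2:ℝ≥0∞)^v * (c * (2:ℝ≥0∞)^α * (2:ℝ≥0∞)^β * A^γ * A^δ)
      = c * ((2:ℝ≥0∞)^x * (2:ℝ≥0∞)^y * A^w) := by
  rw [mul_assoc (c * (2:ℝ≥0∞)^α * (2:ℝ≥0∞)^β), ← ENNReal.rpow_add _ _ hA0 hAt, hA]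
  exact shuffle c (A^w) u v α β x y h2

lemma besov_term (p q₁ q₂ s₁ s₂ : ℝ) (d j : ℕ)
    (hp : 1 < p) (hq₁ : 1 < q₁) (hq₂ : 0 < q₂) (C : ℝ) (hC : 0 ≤ C)
    (A : ℝ≥0∞) (hAt : A ≠ ⊤) :
    (2:ℝ≥0∞) ^ ((j:ℝ) * (-s₁ + (s₂ - s₁) * (q₁ - 1)) * (q₂ / (q₁ - 1))) *
      (2:ℝ≥0∞) ^ ((j:ℝ) * d * (1/2 - 1/(p/(p-1))) * (q₂ / (q₁ - 1))) *
      ((ENNReal.ofReal (C * (2:ℝ)^((j:ℝ)*s₁*q₁) * (2:ℝ)^((j:ℝ)*d*(1/2-1/p)*q₁) *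
          A.toReal^((q₁-p)/p))) ^ (p/(p-1)) * A) ^ ((q₂/(q₁-1)) / (p/(p-1)))
    = ENNReal.ofReal C ^ (q₂/(q₁-1)) *
      ((2:ℝ≥0∞) ^ ((j:ℝ)*s₂*q₂) * (2:ℝ≥0∞) ^ ((j:ℝ)*d*(1/2-1/p)*q₂) * A ^ (q₂/p)) := by
  have hp0 : (0:ℝ) < p := by linarith
  have hpm : (0:ℝ) < p - 1 := by linarith
  have hqm : (0:ℝ) < q₁ - 1 := by linarith
  have hP : (0:ℝ) < p / (p-1) := div_pos hp0 hpm
  have hQ : (0:ℝ) < q₂ / (q₁-1) := div_pos hq₂ hqm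
  have hQP : (0:ℝ) < (q₂/(q₁-1)) / (p/(p-1)) := div_pos hQ hP
  by_cases hA0 : A = 0
  · rw [hA0, mul_zero, ENNReal.zero_rpow_of_pos hQP, mul_zero,
      ENNReal.zero_rpow_of_pos (div_pos hq₂ hp0), mul_zero, mul_zero]
  · -- main case
    have hAe : A ^ ((q₁-p)/p) ≠ ⊤ := by
      simp [ENNReal.rpow_eq_top_iff, hA0, hAt]
    have hofk : ENNReal.ofReal (C * (2:ℝ)^((j:ℝ)*s₁*q₁) * (2:ℝ)^((j:ℝ)*d*(1/2-1/p)*q₁) *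
          A.toReal^((q₁-p)/p))
        = ENNReal.ofReal C * (2:ℝ≥0∞)^((j:ℝ)*s₁*q₁) * (2:ℝ≥0∞)^((j:ℝ)*d*(1/2-1/p)*q₁) *
          A ^ ((q₁-p)/p) := by
      rw [ENNReal.ofReal_mul (by positivity), ENNReal.ofReal_mul (by positivity),
        ENNReal.ofReal_mul hC, ofReal_two_rpow, ofReal_two_rpow,
        ENNReal.toReal_rpow, ENNReal.ofReal_toReal hAe]
    rw [hofk]
    simp only [ENNReal.mul_rpow_of_nonneg _ _ hP.le, ENNReal.mul_rpow_of_nonneg _ _ hQP.le,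
      ← ENNReal.rpow_mul]
    rw [show p / (p - 1) * (q₂ / (q₁ - 1) / (p / (p - 1))) = q₂ / (q₁ - 1) by
      field_simp]
    apply shuffle' _ _ hA0 hAt
    · field_simp
      ring
    · field_simp
      ring

lemma mu_abs (p k x : ℝ) (hp : 1 < p) (hk : 0 ≤ k) :
    |k * Real.sign x * |x| ^ (p-1)| = k * |x| ^ (p-1) := by
  rcases eq_or_ne x 0 with h|h
  · simp [h, Real.sign_zero, abs_zero,
      Real.zero_rpow (show p - 1 ≠ 0 by intro h'; linarith)]
  · have hs : |Real.sign x| = 1 := by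
      rcases lt_or_gt_of_ne h with h'|h'
      · rw [Real.sign_of_neg h']; norm_num
      · rw [Real.sign_of_pos h']; norm_num
    rw [abs_mul, abs_mul, hs, abs_of_nonneg hk,
      abs_of_nonneg (Real.rpow_nonneg (abs_nonneg x) _), mul_one]

lemma row_sum (p : ℝ) (hp : 1 < p) (k : ℝ) (hk : 0 ≤ k) (f : ℕ → ℝ) :
    ∑' l : ℕ, (ENNReal.ofReal (k * |f l| ^ (p-1))) ^ (p/(p-1))
      = (ENNReal.ofReal k) ^ (p/(p-1)) * ∑' l : ℕ, (ENNReal.ofReal |f l|) ^ p := by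
  have hpm : (0:ℝ) < p - 1 := by linarith
  have hP : (0:ℝ) < p/(p-1) := div_pos (by linarith) hpm
  rw [← ENNReal.tsum_mul_left]
  apply tsum_congr
  intro l
  rw [ENNReal.ofReal_mul hk, ← ENNReal.ofReal_rpow_of_nonneg (abs_nonneg _) hpm.le,
    ENNReal.mul_rpow_of_nonneg _ _ hP.le, ← ENNReal.rpow_mul,
    show (p-1) * (p/(p-1)) = p by field_simp]

/-- Theorem 3.4 (computational core): the sequence `μ` representing the subgradient of
`(1/r)‖·‖_{B^{s₁}_{p,q₁}}^r` satisfies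
`‖μ‖_{s₃,p',q₃} = ‖λ‖_{s₁,p,q₁}^{r−q₁} ‖λ‖_{s₂,p,q₂}^{q₁−1}`,
where `s₃ = −s₁ + (s₂−s₁)(q₁−1)`, `q₃ = q₂/(q₁−1)` and `p' = p/(p−1)`. -/
theorem stmt_9 (d : ℕ) (p q₁ q₂ s₁ s₂ r : ℝ)
    (hp : 1 < p) (hq₁ : 1 < q₁) (hq₂ : 1 ≤ q₂) (hr : 0 < r)
    (lam : ℕ → ℕ → ℝ)
    (h1 : besovNorm d s₁ p q₁ lam < ⊤) (h2 : besovNorm d s₂ p q₂ lam < ⊤) :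
    besovNorm d (-s₁ + (s₂ - s₁) * (q₁ - 1)) (p / (p - 1)) (q₂ / (q₁ - 1))
        (fun j l =>
          (besovNorm d s₁ p q₁ lam).toReal ^ (r - q₁) *
            (2 : ℝ) ^ ((j : ℝ) * s₁ * q₁) *
            (2 : ℝ) ^ ((j : ℝ) * d * (1 / 2 - 1 / p) * q₁) *
            ((∑' m : ℕ, (ENNReal.ofReal |lam j m|) ^ p).toReal) ^ ((q₁ - p) / p) *
            Real.sign (lam j l) * |lam j l| ^ (p - 1))
      = besovNorm d s₁ p q₁ lam ^ (r - q₁) * besovNorm d s₂ p q₂ lam ^ (q₁ - 1) := by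
  have hp0 : (0:ℝ) < p := by linarith
  have hpm : (0:ℝ) < p - 1 := by linarith
  have hq10 : (0:ℝ) < q₁ := by linarith
  have hqm : (0:ℝ) < q₁ - 1 := by linarith
  have hq20 : (0:ℝ) < q₂ := by linarith
  have hP : (0:ℝ) < p/(p-1) := div_pos hp0 hpm
  have hQ : (0:ℝ) < q₂/(q₁-1) := div_pos hq20 hqm
  by_cases hN0 : besovNorm d s₁ p q₁ lam = 0
  · have hl0 := besov_eq_zero_imp d s₁ p q₁ hp0 hq10 lam hN0
    have hmu0 : ∀ (j l : ℕ), (besovNorm d s₁ p q₁ lam).toReal ^ (r - q₁) *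
            (2 : ℝ) ^ ((j : ℝ) * s₁ * q₁) *
            (2 : ℝ) ^ ((j : ℝ) * d * (1 / 2 - 1 / p) * q₁) *
            ((∑' m : ℕ, (ENNReal.ofReal |lam j m|) ^ p).toReal) ^ ((q₁ - p) / p) *
            Real.sign (lam j l) * |lam j l| ^ (p - 1) = 0 := by
      intro j l
      rw [hl0 j l, Real.sign_zero, mul_zero, zero_mul]
    rw [besov_zero _ _ _ _ hP hQ _ hmu0, besov_zero d s₂ p q₂ hp0 hq20 lam hl0,
      ENNReal.zero_rpow_of_pos hqm, mul_zero]
  · have hN1t : besovNorm d s₁ p q₁ lam ≠ ⊤ := h1.ne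
    have hAne : ∀ j, (∑' l : ℕ, (ENNReal.ofReal |lam j l|) ^ p) ≠ ⊤ :=
      besov_inner_ne_top d s₁ p q₁ hp0 hq10 lam h1
    set N₂ := besovNorm d s₂ p q₂ lam with hN2def
    set N₁ := besovNorm d s₁ p q₁ lam with hN1def
    set C : ℝ := N₁.toReal ^ (r - q₁) with hCdef
    have hC0 : 0 ≤ C := Real.rpow_nonneg ENNReal.toReal_nonneg _
    have hCeq : ENNReal.ofReal C = N₁ ^ (r - q₁) := by
      rw [hCdef, ENNReal.toReal_rpow, ENNReal.ofReal_toReal]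
      simp [ENNReal.rpow_eq_top_iff, hN0, hN1t]
    have key : ∀ j : ℕ, (2:ℝ≥0∞) ^ ((j:ℝ) * (-s₁ + (s₂ - s₁) * (q₁ - 1)) * (q₂ / (q₁ - 1))) *
        (2:ℝ≥0∞) ^ ((j:ℝ) * d * (1/2 - 1/(p/(p-1))) * (q₂ / (q₁ - 1))) *
        (∑' l : ℕ, (ENNReal.ofReal |C * (2:ℝ)^((j:ℝ)*s₁*q₁) * (2:ℝ)^((j:ℝ)*d*(1/2-1/p)*q₁) *
            ((∑' m : ℕ, (ENNReal.ofReal |lam j m|) ^ p).toReal) ^ ((q₁-p)/p) *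
            Real.sign (lam j l) * |lam j l| ^ (p-1)|) ^ (p/(p-1))) ^ ((q₂/(q₁-1)) / (p/(p-1)))
        = ENNReal.ofReal C ^ (q₂/(q₁-1)) *
          ((2:ℝ≥0∞) ^ ((j:ℝ)*s₂*q₂) * (2:ℝ≥0∞) ^ ((j:ℝ)*d*(1/2-1/p)*q₂) *
            (∑' l : ℕ, (ENNReal.ofReal |lam j l|) ^ p) ^ (q₂/p)) := by
      intro j
      have habs : ∀ l : ℕ, |C * (2:ℝ)^((j:ℝ)*s₁*q₁) * (2:ℝ)^((j:ℝ)*d*(1/2-1/p)*q₁) *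
            ((∑' m : ℕ, (ENNReal.ofReal |lam j m|) ^ p).toReal) ^ ((q₁-p)/p) *
            Real.sign (lam j l) * |lam j l| ^ (p-1)|
          = (C * (2:ℝ)^((j:ℝ)*s₁*q₁) * (2:ℝ)^((j:ℝ)*d*(1/2-1/p)*q₁) *
            ((∑' m : ℕ, (ENNReal.ofReal |lam j m|) ^ p).toReal) ^ ((q₁-p)/p)) * |lam j l| ^ (p-1) :=
        fun l => mu_abs p _ (lam j l) hp (by positivity)
      simp only [habs]
      rw [row_sum p hp _ (by positivity) (fun l => lam j l)]
      exact besov_term p q₁ q₂ s₁ s₂ d j hp hq₁ hq20 C hC0 _ (hAne j)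
    calc besovNorm d (-s₁ + (s₂ - s₁) * (q₁ - 1)) (p / (p - 1)) (q₂ / (q₁ - 1))
          (fun j l => C * (2:ℝ)^((j:ℝ)*s₁*q₁) * (2:ℝ)^((j:ℝ)*d*(1/2-1/p)*q₁) *
            ((∑' m : ℕ, (ENNReal.ofReal |lam j m|) ^ p).toReal) ^ ((q₁-p)/p) *
            Real.sign (lam j l) * |lam j l| ^ (p-1))
        = (∑' j : ℕ, ENNReal.ofReal C ^ (q₂/(q₁-1)) *
            ((2:ℝ≥0∞) ^ ((j:ℝ)*s₂*q₂) * (2:ℝ≥0∞) ^ ((j:ℝ)*d*(1/2-1/p)*q₂) *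
              (∑' l : ℕ, (ENNReal.ofReal |lam j l|) ^ p) ^ (q₂/p))) ^ (1/(q₂/(q₁-1))) := by
          rw [besovNorm]
          exact congrArg (· ^ (1/(q₂/(q₁-1)))) (tsum_congr key)
      _ = ENNReal.ofReal C * (∑' j : ℕ,
            ((2:ℝ≥0∞) ^ ((j:ℝ)*s₂*q₂) * (2:ℝ≥0∞) ^ ((j:ℝ)*d*(1/2-1/p)*q₂) *
              (∑' l : ℕ, (ENNReal.ofReal |lam j l|) ^ p) ^ (q₂/p))) ^ (1/(q₂/(q₁-1))) := by
          rw [ENNReal.tsum_mul_left,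
            ENNReal.mul_rpow_of_nonneg _ _ (le_of_lt (by positivity : (0:ℝ) < 1/(q₂/(q₁-1)))),
            ← ENNReal.rpow_mul, mul_one_div_cancel hQ.ne', ENNReal.rpow_one]
      _ = N₁ ^ (r - q₁) * N₂ ^ (q₁ - 1) := by
          rw [hCeq, hN2def, besovNorm, ← ENNReal.rpow_mul,
            show (1:ℝ)/(q₂/(q₁-1)) = 1/q₂*(q₁-1) by rw [one_div_div]; ring]
end

section
/- Let d ∈ ℕ, 1 < p < ∞, 1 < q < ∞, r := max{2, p, q}, s > 0 and ϱ > 0. Let λ = (λ_{j,l})_{j,l∈ℕ} be a double sequence of reals with ‖λ‖_{s,p,∞} ≤ ϱ, and define μ = (μ_{j,l}) by μ_{j,l} := ‖λ‖_{0,p,q}^{r−q} · 2^{j d (1/2 − 1/p) q} ( ∑_{m} |λ_{j,m}|^p )^{(q−p)/p} · sgn(λ_{j,l}) |λ_{j,l}|^{p−1}, with μ_{j,l} := 0 whenever λ_{j,l} = 0. Set p' := p/(p−1) and q' := q/(q−1). Then for every a > s(q−1) there exists a constant c > 0, depending only on d, p, q, s and a but not on λ, ϱ or j, such that: ‖μ‖_{s(q−1),p',∞}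 ≤ c ϱ^{r−1}, and for all j ∈ ℕ, ‖Q_j μ‖_{a,p',q'} ≤ c ϱ^{r−1} 2^{j(a − s(q−1))} and ‖μ − Q_j μ‖_{0,p',q'} ≤ c ϱ^{r−1} 2^{−j s(q−1)}. -/
open scoped ENNReal

/-- The Besov sequence norm with fine index `q = ∞`:
`‖λ‖_{s,p,∞} = sup_j 2^{js} 2^{jd(1/2−1/p)} (∑_l |λ_{j,l}|^p)^{1/p}`. -/
noncomputable def besovNormInf (d : ℕ) (s p : ℝ) (lam : ℕ → ℕ → ℝ) : ℝ≥0∞ :=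
  ⨆ j : ℕ, (2 : ℝ≥0∞) ^ ((j : ℝ) * s) *
      (2 : ℝ≥0∞) ^ ((j : ℝ) * d * (1 / 2 - 1 / p)) *
      (∑' l : ℕ, (ENNReal.ofReal |lam j l|) ^ p) ^ (1 / p)

/-- The level-`j` truncation `(Q_j λ)_{k,l} = λ_{k,l}` if `k ≤ j`, else `0`. -/
def trunc (j : ℕ) (lam : ℕ → ℕ → ℝ) : ℕ → ℕ → ℝ :=
  fun k l => if k ≤ j then lam k l else 0

/-- The sequence `μ` representing the subgradient of `(1/r)‖·‖_{B^0_{p,q}}^r` at `λ`,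
with `r = max{2,p,q}`:
`μ_{j,l} = ‖λ‖_{0,p,q}^{r−q} 2^{jd(1/2−1/p)q} (∑_m |λ_{j,m}|^p)^{(q−p)/p} sgn(λ_{j,l}) |λ_{j,l}|^{p−1}`. -/
noncomputable def subgradSeq (d : ℕ) (p q : ℝ) (lam : ℕ → ℕ → ℝ) : ℕ → ℕ → ℝ :=
  fun j l =>
    (besovNorm d 0 p q lam).toReal ^ (max 2 (max p q) - q) *
      (2 : ℝ) ^ ((j : ℝ) * d * (1 / 2 - 1 / p) * q) *
      ((∑' m : ℕ, (ENNReal.ofReal |lam j m|) ^ p).toReal) ^ ((q - p) / p) *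
      Real.sign (lam j l) * |lam j l| ^ (p - 1)

/-! On level `j`, `μ_j` is a multiple of `|λ_j|^{p-1}`; with `b_j = 2^{jd(1/2-1/p)} ‖λ_j‖_p` this
gives exactly `2^{jd(1/2-1/p')} ‖μ_j‖_{p'} = ‖λ‖_{0,p,q}^{r-q} b_j^{q-1}`. The hypothesis says
`b_j ≤ ϱ 2^{-js}`, so `‖λ‖_{0,p,q} ≲ ϱ` by a geometric series, and the level norms of `μ` decay like
`ϱ^{r-1} 2^{-js(q-1)}`. The three estimates are then geometric sums: the weighted head `k ≤ j` is
dominated by its last term because `a > s(q-1)`, the tail `k > j` by its first term. -/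

noncomputable def dyadicGeomSum (b : ℝ) : ℝ≥0∞ := ∑' i : ℕ, (2 : ℝ≥0∞) ^ (-(i : ℝ) * b)

lemma two_rpow_add (x y : ℝ) : (2 : ℝ≥0∞) ^ (x + y) = 2 ^ x * 2 ^ y :=
  ENNReal.rpow_add _ _ two_ne_zero ENNReal.ofNat_ne_top

lemma two_rpow_mul_le_iff {x : ℝ} {b R : ℝ≥0∞} : 2 ^ x * b ≤ R ↔ b ≤ R * 2 ^ (-x) := by
  rw [ENNReal.rpow_neg, ← div_eq_mul_inv, ENNReal.le_div_iff_mul_le (by simp) (by simp), mul_comm]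

lemma dyadicGeomSum_ne_top {b : ℝ} (hb : 0 < b) : dyadicGeomSum b ≠ ⊤ := by
  have hpow (i : ℕ) : (2 : ℝ≥0∞) ^ (-(i : ℝ) * b) = (2 ^ (-b)) ^ i := by
    rw [← ENNReal.rpow_natCast, ← ENNReal.rpow_mul]; ring_nf
  simp only [dyadicGeomSum, hpow, ENNReal.tsum_geometric, ne_eq, ENNReal.inv_eq_top]
  exact tsub_eq_zero_iff_le.not.2
    (ENNReal.rpow_lt_one_of_one_lt_of_neg ENNReal.one_lt_two (neg_neg_of_pos hb)).not_ge

lemma dyadicGeomSum_ne_zero (b : ℝ) : dyadicGeomSum b ≠ 0 := by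
  refine ne_of_gt (lt_of_lt_of_le ?_ (ENNReal.le_tsum 0))
  simp

lemma tsum_two_rpow_neg_nat_add (b : ℝ) (n : ℕ) :
    ∑' i : ℕ, (2 : ℝ≥0∞) ^ (-((i + n : ℕ) : ℝ) * b) = 2 ^ (-(n : ℝ) * b) * dyadicGeomSum b := by
  rw [dyadicGeomSum, ← ENNReal.tsum_mul_left]
  congr 1 with i
  rw [← two_rpow_add]; push_cast; ring_nf

lemma sum_range_two_rpow_le (b : ℝ) (j : ℕ) :
    ∑ k ∈ Finset.range (j + 1), (2 : ℝ≥0∞) ^ ((k : ℝ) * b) ≤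
      2 ^ ((j : ℝ) * b) * dyadicGeomSum b := by
  rw [← Finset.sum_range_reflect, dyadicGeomSum, ← ENNReal.tsum_mul_left]
  refine le_of_eq_of_le (Finset.sum_congr rfl fun i hi => ?_) (ENNReal.sum_le_tsum _)
  rw [← two_rpow_add, Nat.add_sub_cancel, Nat.cast_sub (Finset.mem_range_succ_iff.1 hi)]
  ring_nf

lemma tsum_ite_le_eq_tsum_nat_add (f : ℕ → ℝ≥0∞) (n : ℕ) :
    ∑' k, (if n ≤ k then f k else 0) = ∑' i, f (i + n) := by
  rw [← ENNReal.summable.sum_add_tsum_nat_add' (k := n) (f := fun k => if n ≤ k then f k else 0),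
    Finset.sum_eq_zero fun k hk => if_neg (Nat.not_le.2 (Finset.mem_range.1 hk))]
  simp

section Decay

variable {m : ℕ → ℝ≥0∞} {K : ℝ≥0∞} {t : ℝ}

lemma two_rpow_mul_rpow_le (hm : ∀ k, m k ≤ K * 2 ^ (-(k : ℝ) * t)) (a : ℝ) {q : ℝ} (hq : 0 ≤ q)
    (k : ℕ) : (2 ^ ((k : ℝ) * a) * m k) ^ q ≤ K ^ q * 2 ^ ((k : ℝ) * ((a - t) * q)) := by
  calc (2 ^ ((k : ℝ) * a) * m k) ^ q ≤ (K * 2 ^ ((k : ℝ) * (a - t))) ^ q := by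
        refine ENNReal.rpow_le_rpow ?_ hq
        calc 2 ^ ((k : ℝ) * a) * m k ≤ 2 ^ ((k : ℝ) * a) * (K * 2 ^ (-(k : ℝ) * t)) := by
              gcongr; exact hm k
          _ = K * 2 ^ ((k : ℝ) * (a - t)) := by
            rw [mul_left_comm, ← two_rpow_add]; ring_nf
    _ = K ^ q * 2 ^ ((k : ℝ) * ((a - t) * q)) := by
        rw [ENNReal.mul_rpow_of_nonneg _ _ hq, ← ENNReal.rpow_mul, mul_assoc]

lemma rpow_tsum_head_le (hm : ∀ k, m k ≤ K * 2 ^ (-(k : ℝ) * t)) (a : ℝ) {q : ℝ} (hq : 0 < q)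
    (j : ℕ) :
    (∑' k : ℕ, (2 ^ ((k : ℝ) * a) * (if k ≤ j then m k else 0)) ^ q) ^ (1 / q) ≤
      K * dyadicGeomSum ((a - t) * q) ^ (1 / q) * 2 ^ ((j : ℝ) * (a - t)) := by
  rw [one_div, ENNReal.rpow_inv_le_iff hq]
  calc ∑' k : ℕ, (2 ^ ((k : ℝ) * a) * (if k ≤ j then m k else 0)) ^ q
      = ∑ k ∈ Finset.range (j + 1), (2 ^ ((k : ℝ) * a) * m k) ^ q := by
        rw [tsum_eq_sum (s := Finset.range (j + 1)) fun k hk => by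
          simp [Finset.mem_range_succ_iff.not.1 hk, ENNReal.zero_rpow_of_pos hq]]
        exact Finset.sum_congr rfl fun k hk => by rw [if_pos (Finset.mem_range_succ_iff.1 hk)]
    _ ≤ ∑ k ∈ Finset.range (j + 1), K ^ q * 2 ^ ((k : ℝ) * ((a - t) * q)) :=
        Finset.sum_le_sum fun k _ => two_rpow_mul_rpow_le hm a hq.le k
    _ ≤ K ^ q * (2 ^ ((j : ℝ) * ((a - t) * q)) * dyadicGeomSum ((a - t) * q)) := by
        rw [← Finset.mul_sum]
        gcongr
        exact sum_range_two_rpow_le _ j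
    _ = (K * dyadicGeomSum ((a - t) * q) ^ q⁻¹ * 2 ^ ((j : ℝ) * (a - t))) ^ q := by
        rw [ENNReal.mul_rpow_of_nonneg _ _ hq.le, ENNReal.mul_rpow_of_nonneg _ _ hq.le,
          ENNReal.rpow_inv_rpow hq.ne', ← ENNReal.rpow_mul]
        ring_nf

lemma rpow_tsum_tail_le (hm : ∀ k, m k ≤ K * 2 ^ (-(k : ℝ) * t)) (a : ℝ) {q : ℝ} (hq : 0 < q)
    (n : ℕ) :
    (∑' k : ℕ, (2 ^ ((k : ℝ) * a) * (if n ≤ k then m k else 0)) ^ q) ^ (1 / q) ≤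
      K * dyadicGeomSum ((t - a) * q) ^ (1 / q) * 2 ^ (-(n : ℝ) * (t - a)) := by
  rw [one_div, ENNReal.rpow_inv_le_iff hq]
  calc ∑' k : ℕ, (2 ^ ((k : ℝ) * a) * (if n ≤ k then m k else 0)) ^ q
      = ∑' k : ℕ, if n ≤ k then (2 ^ ((k : ℝ) * a) * m k) ^ q else 0 := by
        congr with k
        split_ifs <;> simp [ENNReal.zero_rpow_of_pos hq]
    _ ≤ ∑' k : ℕ, if n ≤ k then K ^ q * 2 ^ (-(k : ℝ) * ((t - a) * q)) else 0 := by
        gcongr with k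
        split_ifs
        · exact (two_rpow_mul_rpow_le hm a hq.le k).trans_eq (by ring_nf)
        · rfl
    _ = K ^ q * (2 ^ (-(n : ℝ) * ((t - a) * q)) * dyadicGeomSum ((t - a) * q)) := by
        rw [tsum_ite_le_eq_tsum_nat_add, ENNReal.tsum_mul_left, tsum_two_rpow_neg_nat_add]
    _ = (K * dyadicGeomSum ((t - a) * q) ^ q⁻¹ * 2 ^ (-(n : ℝ) * (t - a))) ^ q := by
        rw [ENNReal.mul_rpow_of_nonneg _ _ hq.le, ENNReal.mul_rpow_of_nonneg _ _ hq.le,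
          ENNReal.rpow_inv_rpow hq.ne', ← ENNReal.rpow_mul]
        ring_nf

end Decay
noncomputable def levelNorm (d : ℕ) (p : ℝ) (lam : ℕ → ℕ → ℝ) (j : ℕ) : ℝ≥0∞ :=
  2 ^ ((j : ℝ) * d * (1 / 2 - 1 / p)) * (∑' l, ENNReal.ofReal |lam j l| ^ p) ^ (1 / p)

section LevelNorm

variable (d : ℕ) {s p : ℝ} (lam : ℕ → ℕ → ℝ)

lemma besovNormInf_eq_iSup_levelNorm :
    besovNormInf d s p lam = ⨆ j : ℕ, 2 ^ ((j : ℝ) * s) * levelNorm d p lam j := by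
  simp only [besovNormInf, levelNorm, mul_assoc]

lemma besovNorm_eq_tsum_levelNorm {q : ℝ} (hq : 0 ≤ q) :
    besovNorm d s p q lam =
      (∑' j : ℕ, (2 ^ ((j : ℝ) * s) * levelNorm d p lam j) ^ q) ^ (1 / q) := by
  simp only [besovNorm, levelNorm, ENNReal.mul_rpow_of_nonneg _ _ hq, ← ENNReal.rpow_mul,
    one_div_mul_eq_div, mul_assoc]

lemma levelNorm_trunc (hp : 0 < p) (j k : ℕ) :
    levelNorm d p (trunc j lam) k = if k ≤ j then levelNorm d p lam k else 0 := by
  split_ifs with hk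
  · simp only [levelNorm, trunc, if_pos hk]
  · simp [levelNorm, trunc, hk, hp]

lemma levelNorm_sub_trunc (hp : 0 < p) (j k : ℕ) :
    levelNorm d p (fun k l => lam k l - trunc j lam k l) k =
      if j + 1 ≤ k then levelNorm d p lam k else 0 := by
  split_ifs with hk
  · simp [levelNorm, trunc, Nat.not_le.2 hk]
  · simp [levelNorm, trunc, Nat.le_of_lt_succ (Nat.not_le.1 hk), hp]

lemma levelNorm_eq_ofReal (hp : 0 < p) {j : ℕ} (hfin : ∑' l, ENNReal.ofReal |lam j l| ^ p ≠ ⊤) :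
    levelNorm d p lam j = ENNReal.ofReal ((2 : ℝ) ^ ((j : ℝ) * d * (1 / 2 - 1 / p)) *
      (∑' l, ENNReal.ofReal |lam j l| ^ p).toReal ^ (1 / p)) := by
  rw [levelNorm, ENNReal.ofReal_mul (by positivity), ← ENNReal.ofReal_rpow_of_pos two_pos,
    ENNReal.ofReal_ofNat, ← ENNReal.ofReal_rpow_of_nonneg ENNReal.toReal_nonneg (by positivity),
    ENNReal.ofReal_toReal hfin]

end LevelNorm

lemma abs_sign_mul_rpow_abs (x : ℝ) {e : ℝ} (he : e ≠ 0) : |Real.sign x * |x| ^ e| = |x| ^ e := by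
  rcases eq_or_ne x 0 with rfl | hx
  · simp [Real.zero_rpow he]
  · rcases Real.sign_apply_eq_of_ne_zero x hx with h | h <;>
      simp [h, abs_of_nonneg (Real.rpow_nonneg (abs_nonneg x) e)]

lemma two_rpow_mul_rpow_conj_eq {p q σ : ℝ} (hp : 1 < p) (hq : 1 < q) (hσ : 0 ≤ σ) (N x : ℝ) :
    (2 : ℝ) ^ (x * (1 / 2 - 1 / (p / (p - 1)))) *
        (N * 2 ^ (x * (1 / 2 - 1 / p) * q) * σ ^ ((q - p) / p)) * σ ^ (1 / (p / (p - 1))) =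
      N * (2 ^ (x * (1 / 2 - 1 / p)) * σ ^ (1 / p)) ^ (q - 1) := by
  have hp' : 0 < p / (p - 1) := div_pos (by linarith) (by linarith)
  rcases hσ.eq_or_lt with rfl | hσ
  · rw [Real.zero_rpow (x := 1 / (p / (p - 1))) (by positivity),
      Real.zero_rpow (x := 1 / p) (by positivity), mul_zero, mul_zero,
      Real.zero_rpow (by linarith), mul_zero]
  rw [Real.mul_rpow (by positivity) (by positivity), ← Real.rpow_mul zero_le_two,
    ← Real.rpow_mul hσ.le]
  calc (2 : ℝ) ^ (x * (1 / 2 - 1 / (p / (p - 1)))) *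
        (N * 2 ^ (x * (1 / 2 - 1 / p) * q) * σ ^ ((q - p) / p)) * σ ^ (1 / (p / (p - 1)))
      = N * ((2 : ℝ) ^ (x * (1 / 2 - 1 / (p / (p - 1)))) * 2 ^ (x * (1 / 2 - 1 / p) * q)) *
          (σ ^ ((q - p) / p) * σ ^ (1 / (p / (p - 1)))) := by ring
    _ = N * ((2 : ℝ) ^ (x * (1 / 2 - 1 / p) * (q - 1)) * σ ^ (1 / p * (q - 1))) := by
      rw [← Real.rpow_add two_pos, ← Real.rpow_add hσ, mul_assoc]
      congr 3 <;> field_simp <;> ring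

lemma levelNorm_subgradSeq (d : ℕ) {p q : ℝ} (hp : 1 < p) (hq : 1 < q) (lam : ℕ → ℕ → ℝ) {j : ℕ}
    (hfin : ∑' l, ENNReal.ofReal |lam j l| ^ p ≠ ⊤) :
    levelNorm d (p / (p - 1)) (subgradSeq d p q lam) j =
      ENNReal.ofReal ((besovNorm d 0 p q lam).toReal ^ (max 2 (max p q) - q)) *
        levelNorm d p lam j ^ (q - 1) := by
  have hp' : 0 < p / (p - 1) := div_pos (by linarith) (by linarith)
  set N := (besovNorm d 0 p q lam).toReal ^ (max 2 (max p q) - q)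
  set σ := (∑' l, ENNReal.ofReal |lam j l| ^ p).toReal
  set A := N * (2 : ℝ) ^ ((j : ℝ) * d * (1 / 2 - 1 / p) * q) * σ ^ ((q - p) / p)
  have hA : 0 ≤ A := by positivity
  have hterm (l : ℕ) : ENNReal.ofReal |subgradSeq d p q lam j l| ^ (p / (p - 1)) =
      ENNReal.ofReal A ^ (p / (p - 1)) * ENNReal.ofReal |lam j l| ^ p := by
    have habs : |subgradSeq d p q lam j l| = A * |lam j l| ^ (p - 1) := by
      rw [subgradSeq, mul_assoc _ (Real.sign _), abs_mul,
        abs_sign_mul_rpow_abs _ (by linarith), abs_of_nonneg hA]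
    rw [habs, ENNReal.ofReal_mul hA, ENNReal.mul_rpow_of_nonneg _ _ hp'.le,
      ← ENNReal.ofReal_rpow_of_nonneg (abs_nonneg _) (by linarith), ← ENNReal.rpow_mul,
      mul_div_cancel₀ _ (by linarith : p - 1 ≠ 0)]
  have hsum : ∑' l, ENNReal.ofReal |subgradSeq d p q lam j l| ^ (p / (p - 1)) =
      ENNReal.ofReal (A ^ (p / (p - 1)) * σ) := by
    rw [tsum_congr hterm, ENNReal.tsum_mul_left, ENNReal.ofReal_mul (Real.rpow_nonneg hA _),
      ENNReal.ofReal_rpow_of_nonneg hA hp'.le, ENNReal.ofReal_toReal hfin]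
  rw [levelNorm_eq_ofReal d _ hp' (hsum ▸ ENNReal.ofReal_ne_top),
    levelNorm_eq_ofReal d lam (by linarith) hfin, hsum, ENNReal.toReal_ofReal (by positivity),
    ENNReal.ofReal_rpow_of_nonneg (by positivity) (by linarith),
    ← ENNReal.ofReal_mul (by positivity), Real.mul_rpow (by positivity) ENNReal.toReal_nonneg,
    ← Real.rpow_mul hA, mul_one_div_cancel hp'.ne', Real.rpow_one, ← mul_assoc]
  exact congrArg ENNReal.ofReal (two_rpow_mul_rpow_conj_eq hp hq ENNReal.toReal_nonneg _ _)

lemma levelNorm_le_of_besovNormInf_le {d : ℕ} {s p : ℝ} {lam : ℕ → ℕ → ℝ} {R : ℝ≥0∞}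
    (h : besovNormInf d s p lam ≤ R) (j : ℕ) : levelNorm d p lam j ≤ R * 2 ^ (-(j : ℝ) * s) := by
  rw [besovNormInf_eq_iSup_levelNorm, iSup_le_iff] at h
  rw [neg_mul]
  exact two_rpow_mul_le_iff.1 (h j)

lemma tsum_rpow_ne_top_of_levelNorm_ne_top {d : ℕ} {p : ℝ} (hp : 0 < p) {lam : ℕ → ℕ → ℝ}
    {j : ℕ} (h : levelNorm d p lam j ≠ ⊤) : ∑' l, ENNReal.ofReal |lam j l| ^ p ≠ ⊤ := by
  intro hS
  rw [levelNorm, hS, ENNReal.top_rpow_of_pos (by positivity),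
    ENNReal.mul_top (ENNReal.rpow_pos (by norm_num) ENNReal.ofNat_ne_top).ne'] at h
  exact h rfl

/-- `dyadicGeomSum (s * q) ^ (1 / q)` bounds `‖λ‖_{0,p,q} / ϱ`; the last two summands are the
geometric factors of the head and tail estimates. -/
noncomputable def subgradConst (p q s a : ℝ) : ℝ≥0∞ :=
  (dyadicGeomSum (s * q) ^ (1 / q)) ^ (max 2 (max p q) - q) *
    (1 + dyadicGeomSum ((a - s * (q - 1)) * (q / (q - 1))) ^ (1 / (q / (q - 1))) +
      dyadicGeomSum (s * (q - 1) * (q / (q - 1))) ^ (1 / (q / (q - 1))))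

lemma subgradConst_ne_top {p q s a : ℝ} (hq : 1 < q) (hs : 0 < s) (ha : s * (q - 1) < a) :
    subgradConst p q s a ≠ ⊤ := by
  have hq' : 0 < q / (q - 1) := div_pos (by linarith) (by linarith)
  have hG {b x : ℝ} (hb : 0 < b) (hx : 0 ≤ x) : dyadicGeomSum b ^ x ≠ ⊤ :=
    ENNReal.rpow_ne_top_of_nonneg hx (dyadicGeomSum_ne_top hb)
  refine ENNReal.mul_ne_top (ENNReal.rpow_ne_top_of_ne_zero ?_ (hG (by positivity) (by positivity)))
    (ENNReal.add_ne_top.2 ⟨ENNReal.add_ne_top.2 ⟨ENNReal.one_ne_top,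
      hG (mul_pos (by linarith) hq') (by positivity)⟩,
      hG (mul_pos (by nlinarith) hq') (by positivity)⟩)
  exact (ENNReal.rpow_pos (pos_iff_ne_zero.2 (dyadicGeomSum_ne_zero _))
    (dyadicGeomSum_ne_top (by positivity))).ne'

lemma subgradConst_ne_zero {p q s a : ℝ} (hq : 0 < q) (hs : 0 < s) : subgradConst p q s a ≠ 0 := by
  have hG := dyadicGeomSum_ne_top (mul_pos hs hq)
  have hC₁ : 0 < dyadicGeomSum (s * q) ^ (1 / q) :=
    ENNReal.rpow_pos (pos_iff_ne_zero.2 (dyadicGeomSum_ne_zero _)) hG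
  refine mul_ne_zero (ENNReal.rpow_pos hC₁ (ENNReal.rpow_ne_top_of_nonneg (by positivity) hG)).ne'
    (one_pos.trans_le (le_self_add.trans le_self_add)).ne'

lemma mul_mul_two_rpow_le {B G C R : ℝ≥0∞} {x y : ℝ} (h : B * G ≤ C) (hxy : x ≤ y) :
    B * R * G * 2 ^ x ≤ C * R * 2 ^ y :=
  calc B * R * G * 2 ^ x = B * G * R * 2 ^ x := by ring
    _ ≤ C * R * 2 ^ y := by
      gcongr
      exact one_le_two

section SubgradientBounds

variable {d : ℕ} {p q s ϱ : ℝ} {lam : ℕ → ℕ → ℝ}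

lemma levelNorm_subgradSeq_le (hp : 1 < p) (hq : 1 < q) (hϱ : 0 < ϱ)
    (hlam : besovNormInf d s p lam ≤ ENNReal.ofReal ϱ) (j : ℕ) :
    levelNorm d (p / (p - 1)) (subgradSeq d p q lam) j ≤
      (dyadicGeomSum (s * q) ^ (1 / q)) ^ (max 2 (max p q) - q) *
        ENNReal.ofReal ϱ ^ (max 2 (max p q) - 1) * 2 ^ (-(j : ℝ) * (s * (q - 1))) := by
  have hrq : 0 ≤ max 2 (max p q) - q := sub_nonneg.2 (le_max_of_le_right (le_max_right p q))
  have hb := levelNorm_le_of_besovNormInf_le hlam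
  have hN : besovNorm d 0 p q lam ≤ ENNReal.ofReal ϱ * dyadicGeomSum (s * q) ^ (1 / q) := by
    rw [besovNorm_eq_tsum_levelNorm d lam (by linarith)]
    simpa using rpow_tsum_tail_le hb 0 (by linarith : 0 < q) 0
  have hfin : ∑' l, ENNReal.ofReal |lam j l| ^ p ≠ ⊤ :=
    tsum_rpow_ne_top_of_levelNorm_ne_top (by linarith)
      ((hb j).trans_lt (ENNReal.mul_lt_top ENNReal.ofReal_lt_top
        (ENNReal.rpow_ne_top_of_ne_zero two_ne_zero ENNReal.ofNat_ne_top).lt_top)).ne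
  rw [levelNorm_subgradSeq d hp hq lam hfin]
  calc _ ≤ (ENNReal.ofReal ϱ * dyadicGeomSum (s * q) ^ (1 / q)) ^ (max 2 (max p q) - q) *
        (ENNReal.ofReal ϱ * 2 ^ (-(j : ℝ) * s)) ^ (q - 1) := by
        gcongr
        · rw [← ENNReal.ofReal_rpow_of_nonneg ENNReal.toReal_nonneg hrq]
          exact ENNReal.rpow_le_rpow (ENNReal.ofReal_toReal_le.trans hN) hrq
        · exact hb j
    _ = _ := by
        rw [ENNReal.mul_rpow_of_nonneg _ _ hrq, ENNReal.mul_rpow_of_nonneg _ _ (by linarith),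
          ← ENNReal.rpow_mul (2 : ℝ≥0∞),
          show max 2 (max p q) - 1 = (max 2 (max p q) - q) + (q - 1) by ring,
          ENNReal.rpow_add _ _ (ENNReal.ofReal_pos.2 hϱ).ne' ENNReal.ofReal_ne_top,
          mul_assoc (-(j : ℝ))]
        ring

lemma besovNormInf_subgradSeq_le (hp : 1 < p) (hq : 1 < q) (hϱ : 0 < ϱ)
    (hlam : besovNormInf d s p lam ≤ ENNReal.ofReal ϱ) (a : ℝ) :
    besovNormInf d (s * (q - 1)) (p / (p - 1)) (subgradSeq d p q lam) ≤
      subgradConst p q s a * ENNReal.ofReal ϱ ^ (max 2 (max p q) - 1) := by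
  rw [besovNormInf_eq_iSup_levelNorm]
  refine iSup_le fun j => two_rpow_mul_le_iff.2 ((levelNorm_subgradSeq_le hp hq hϱ hlam j).trans ?_)
  calc _ = _ * ENNReal.ofReal ϱ ^ (max 2 (max p q) - 1) * 1 * 2 ^ (-(j : ℝ) * (s * (q - 1))) := by
        rw [mul_one]
    _ ≤ _ := mul_mul_two_rpow_le (mul_le_mul_right (le_self_add.trans le_self_add) _)
        (neg_mul _ _).le

lemma besovNorm_trunc_subgradSeq_le (hp : 1 < p) (hq : 1 < q) (hϱ : 0 < ϱ)
    (hlam : besovNormInf d s p lam ≤ ENNReal.ofReal ϱ) (a : ℝ) (j : ℕ) :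
    besovNorm d a (p / (p - 1)) (q / (q - 1)) (trunc j (subgradSeq d p q lam)) ≤
      subgradConst p q s a * ENNReal.ofReal ϱ ^ (max 2 (max p q) - 1) *
        2 ^ ((j : ℝ) * (a - s * (q - 1))) := by
  have hp' : 0 < p / (p - 1) := div_pos (by linarith) (by linarith)
  have hq' : 0 < q / (q - 1) := div_pos (by linarith) (by linarith)
  rw [besovNorm_eq_tsum_levelNorm _ _ hq'.le]
  simp only [levelNorm_trunc d _ hp']
  exact (rpow_tsum_head_le (levelNorm_subgradSeq_le hp hq hϱ hlam) a hq' j).trans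
    (mul_mul_two_rpow_le (mul_le_mul_right (le_add_self.trans le_self_add) _) le_rfl)

lemma besovNorm_sub_trunc_subgradSeq_le (hp : 1 < p) (hq : 1 < q) (hs : 0 < s) (hϱ : 0 < ϱ)
    (hlam : besovNormInf d s p lam ≤ ENNReal.ofReal ϱ) (a : ℝ) (j : ℕ) :
    besovNorm d 0 (p / (p - 1)) (q / (q - 1))
        (fun k l => subgradSeq d p q lam k l - trunc j (subgradSeq d p q lam) k l) ≤
      subgradConst p q s a * ENNReal.ofReal ϱ ^ (max 2 (max p q) - 1) *
        2 ^ (-(j : ℝ) * s * (q - 1)) := by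
  have hp' : 0 < p / (p - 1) := div_pos (by linarith) (by linarith)
  have hq' : 0 < q / (q - 1) := div_pos (by linarith) (by linarith)
  rw [besovNorm_eq_tsum_levelNorm _ _ hq'.le]
  simp only [levelNorm_sub_trunc d _ hp']
  have htail := rpow_tsum_tail_le (levelNorm_subgradSeq_le hp hq hϱ hlam) 0 hq' (j + 1)
  rw [sub_zero] at htail
  refine htail.trans (mul_mul_two_rpow_le (mul_le_mul_right le_add_self _) ?_)
  push_cast
  nlinarith

end SubgradientBounds

/-- Corollary 3.7 in sequence form: if `‖λ‖_{s,p,∞} ≤ ϱ` and `a > s(q−1)`, then the subgradient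
sequence `μ` satisfies `‖μ‖_{s(q−1),p',∞} ≤ c ϱ^{r−1}`,
`‖Q_j μ‖_{a,p',q'} ≤ c ϱ^{r−1} 2^{j(a−s(q−1))}` and
`‖μ − Q_j μ‖_{0,p',q'} ≤ c ϱ^{r−1} 2^{−js(q−1)}`, with `c` independent of `λ`, `ϱ` and `j`. -/
theorem stmt_12 (d : ℕ) (p q s a : ℝ) (hp1 : 1 < p) (hq1 : 1 < q) (hs : 0 < s)
    (ha : s * (q - 1) < a) :
    ∃ c : ℝ, 0 < c ∧ ∀ ϱ : ℝ, 0 < ϱ → ∀ lam : ℕ → ℕ → ℝ,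
      besovNormInf d s p lam ≤ ENNReal.ofReal ϱ →
      (besovNormInf d (s * (q - 1)) (p / (p - 1)) (subgradSeq d p q lam) ≤
          ENNReal.ofReal (c * ϱ ^ (max 2 (max p q) - 1))) ∧
      (∀ j : ℕ,
        besovNorm d a (p / (p - 1)) (q / (q - 1)) (trunc j (subgradSeq d p q lam)) ≤
          ENNReal.ofReal (c * ϱ ^ (max 2 (max p q) - 1) *
            (2 : ℝ) ^ ((j : ℝ) * (a - s * (q - 1))))) ∧
      (∀ j : ℕ,
        besovNorm d 0 (p / (p - 1)) (q / (q - 1))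
            (fun k l => subgradSeq d p q lam k l - trunc j (subgradSeq d p q lam) k l) ≤
          ENNReal.ofReal (c * ϱ ^ (max 2 (max p q) - 1) *
            (2 : ℝ) ^ (-(j : ℝ) * s * (q - 1)))) := by
  have hC := subgradConst_ne_top (p := p) hq1 hs ha
  refine ⟨(subgradConst p q s a).toReal,
    ENNReal.toReal_pos (subgradConst_ne_zero (by linarith) hs) hC, fun ϱ hϱ lam hlam => ?_⟩
  have hcast (e : ℝ) : ENNReal.ofReal ((subgradConst p q s a).toReal * ϱ ^ e) =
      subgradConst p q s a * ENNReal.ofReal ϱ ^ e := by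
    rw [ENNReal.ofReal_mul ENNReal.toReal_nonneg, ENNReal.ofReal_toReal hC,
      ENNReal.ofReal_rpow_of_pos hϱ]
  have hcast₂ {x : ℝ} (hx : 0 ≤ x) (y : ℝ) :
      ENNReal.ofReal (x * (2 : ℝ) ^ y) = ENNReal.ofReal x * 2 ^ y := by
    rw [ENNReal.ofReal_mul hx, ← ENNReal.ofReal_rpow_of_pos two_pos, ENNReal.ofReal_ofNat]
  refine ⟨?_, fun j => ?_, fun j => ?_⟩
  · rw [hcast]
    exact besovNormInf_subgradSeq_le hp1 hq1 hϱ hlam a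
  · rw [hcast₂ (by positivity), hcast]
    exact besovNorm_trunc_subgradSeq_le hp1 hq1 hϱ hlam a j
  · rw [hcast₂ (by positivity), hcast]
    exact besovNorm_sub_trunc_subgradSeq_le hp1 hq1 hs hϱ hlam a j
end

section
/- Let X and Y be real normed spaces, F : X → Y any map, K ⊆ X, R : Y → X any map, and δ > 0. Then for all f₁, f₂ ∈ K with ‖F(f₁) − F(f₂)‖_Y ≤ 2δ, there exist f ∈ {f₁, f₂} and g ∈ Y with ‖F(f) − g‖_Y ≤ δ and ‖f − R(g)‖_X ≥ (1/2) ‖f₁ − f₂‖_X. Consequently, the worst-case error of R satisfies sup{ ‖f − R(g)‖_X : f ∈ K, g ∈ Y, ‖F(f) − g‖_Y ≤ δ } ≥ (1/2) ω(2δ, K), where ω(δ, K) := sup{ ‖f₁ − f₂‖_X : f₁, f₂ ∈ K, ‖F(f₁) − F(f₂)‖_Y ≤ δ } is the modulus of continuity of (F|_K)^{−1} (suprema taken in [0, ∞]). -/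
open scoped ENNReal

lemma exists_mem_pair_half_norm_sub_le {X : Type*} [SeminormedAddCommGroup X] (f₁ f₂ x : X) :
    ∃ f ∈ ({f₁, f₂} : Set X), (1 / 2) * ‖f₁ - f₂‖ ≤ ‖f - x‖ := by
  have htri : ‖f₁ - f₂‖ ≤ ‖f₁ - x‖ + ‖f₂ - x‖ := by
    simpa only [dist_eq_norm] using dist_triangle_right f₁ f₂ x
  rcases le_total ((1 / 2) * ‖f₁ - f₂‖) ‖f₁ - x‖ with h | h
  · exact ⟨f₁, Or.inl rfl, h⟩
  · exact ⟨f₂, Or.inr rfl, by linarith⟩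

lemma norm_sub_midpoint_le {Y : Type*} [NormedAddCommGroup Y] [NormedSpace ℝ Y] {y₁ y₂ : Y}
    {δ : ℝ} (h : ‖y₁ - y₂‖ ≤ 2 * δ) :
    ‖y₁ - midpoint ℝ y₁ y₂‖ ≤ δ ∧ ‖y₂ - midpoint ℝ y₁ y₂‖ ≤ δ := by
  simp only [← dist_eq_norm, dist_left_midpoint, dist_right_midpoint] at h ⊢
  simp only [Real.norm_ofNat]
  constructor <;> linarith

/-- The data `g` is the midpoint of `F f₁` and `F f₂`: it is `δ`-close to both, so `R` cannot
tell `f₁` from `f₂` and misses one of them by at least half their distance. -/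
lemma exists_mem_pair_noisy_data_half_norm_sub_le {X Y : Type*} [SeminormedAddCommGroup X]
    [NormedAddCommGroup Y] [NormedSpace ℝ Y] (F : X → Y) (R : Y → X) {δ : ℝ} {f₁ f₂ : X}
    (h : ‖F f₁ - F f₂‖ ≤ 2 * δ) :
    ∃ f ∈ ({f₁, f₂} : Set X), ∃ g : Y, ‖F f - g‖ ≤ δ ∧ (1 / 2) * ‖f₁ - f₂‖ ≤ ‖f - R g‖ := by
  set g := midpoint ℝ (F f₁) (F f₂)
  obtain ⟨hg₁, hg₂⟩ := norm_sub_midpoint_le h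
  obtain ⟨f, hf, hge⟩ := exists_mem_pair_half_norm_sub_le f₁ f₂ (R g)
  refine ⟨f, hf, g, ?_, hge⟩
  rcases hf with rfl | rfl
  exacts [hg₁, hg₂]

theorem stmt_13_general {X Y : Type*} [NormedAddCommGroup X]
    [NormedAddCommGroup Y] [NormedSpace ℝ Y]
    (F : X → Y) (K : Set X) (R : Y → X) (δ : ℝ) :
    (∀ f₁ ∈ K, ∀ f₂ ∈ K, ‖F f₁ - F f₂‖ ≤ 2 * δ →
      ∃ f ∈ ({f₁, f₂} : Set X), ∃ g : Y,
        ‖F f - g‖ ≤ δ ∧ (1 / 2) * ‖f₁ - f₂‖ ≤ ‖f - R g‖) ∧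
    (1 / 2 : ℝ≥0∞) *
        sSup {x : ℝ≥0∞ | ∃ f₁ ∈ K, ∃ f₂ ∈ K,
          ‖F f₁ - F f₂‖ ≤ 2 * δ ∧ x = ENNReal.ofReal ‖f₁ - f₂‖} ≤
      sSup {x : ℝ≥0∞ | ∃ f ∈ K, ∃ g : Y,
          ‖F f - g‖ ≤ δ ∧ x = ENNReal.ofReal ‖f - R g‖} := by
  refine ⟨fun f₁ _ f₂ _ h ↦ exists_mem_pair_noisy_data_half_norm_sub_le F R h, ?_⟩
  rw [ENNReal.mul_sSup]
  refine iSup₂_le ?_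
  rintro _ ⟨f₁, hf₁, f₂, hf₂, hF, rfl⟩
  obtain ⟨f, hf, g, hg, hge⟩ := exists_mem_pair_noisy_data_half_norm_sub_le F R hF
  have hfK : f ∈ K := by rcases hf with rfl | rfl <;> assumption
  refine le_sSup_of_le ⟨f, hfK, g, hg, rfl⟩ ?_
  calc (1 / 2 : ℝ≥0∞) * ENNReal.ofReal ‖f₁ - f₂‖
      = ENNReal.ofReal ((1 / 2) * ‖f₁ - f₂‖) := by
        rw [ENNReal.ofReal_mul (by norm_num), ENNReal.ofReal_div_of_pos two_pos]; simp
    _ ≤ ENNReal.ofReal ‖f - R g‖ := ENNReal.ofReal_le_ofReal hge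

/-- Lemma 3.8: for any reconstruction method `R`, for `f₁, f₂ ∈ K` with
`‖F(f₁) − F(f₂)‖ ≤ 2δ` one of `f₁, f₂` together with some data `g` at noise level `δ` realizes
an error `≥ (1/2)‖f₁ − f₂‖`; consequently the worst-case error of `R` on `K` at noise level `δ`
is bounded below by half the modulus of continuity `ω(2δ, K)` (suprema taken in `[0,∞]`). -/
theorem stmt_13 {X Y : Type*} [NormedAddCommGroup X] [NormedSpace ℝ X]
    [NormedAddCommGroup Y] [NormedSpace ℝ Y]
    (F : X → Y) (K : Set X) (R : Y → X) (δ : ℝ) (hδ : 0 < δ) :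
    (∀ f₁ ∈ K, ∀ f₂ ∈ K, ‖F f₁ - F f₂‖ ≤ 2 * δ →
      ∃ f ∈ ({f₁, f₂} : Set X), ∃ g : Y,
        ‖F f - g‖ ≤ δ ∧ (1 / 2) * ‖f₁ - f₂‖ ≤ ‖f - R g‖) ∧
    (1 / 2 : ℝ≥0∞) *
        sSup {x : ℝ≥0∞ | ∃ f₁ ∈ K, ∃ f₂ ∈ K,
          ‖F f₁ - F f₂‖ ≤ 2 * δ ∧ x = ENNReal.ofReal ‖f₁ - f₂‖} ≤
      sSup {x : ℝ≥0∞ | ∃ f ∈ K, ∃ g : Y,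
          ‖F f - g‖ ≤ δ ∧ x = ENNReal.ofReal ‖f - R g‖} :=
  stmt_13_general F K R δ
end

section
/- Let s > 0 and t̄ > 0. There exists a constant c > 0, depending only on s and t̄, such that for all real numbers ϱ > 0 and 0 < δ ≤ e^{−t̄} ϱ, there exists k ∈ ℕ with min( 2^{−ks} ϱ, e^{t̄ · 2^{2k}} δ ) ≥ c · ϱ · (ln(ϱ/δ))^{−s/2}; in particular sup_{k∈ℕ} min( 2^{−ks} ϱ, e^{t̄ · 2^{2k}} δ ) ≥ c · ϱ · (ln(ϱ/δ))^{−s/2}. -/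
/-!
Put `L = ln(ϱ/δ)`, so that `L ≥ t̄` and `δ = e^{-L} ϱ`. Choose `k` with `L ≤ t̄ 4^k ≤ 4L`
(possible since `L/t̄ ≥ 1`). Then `e^{t̄ 4^k} δ ≥ e^L δ = ϱ ≥ 2^{-ks} ϱ`, so the minimum
is `2^{-ks} ϱ = (4^k)^{-s/2} ϱ ≥ (4L/t̄)^{-s/2} ϱ`, i.e. the claim holds with `c = (t̄/4)^{s/2}`.
-/

open Real

theorem exists_pow_mem_Icc {α : Type*} [Semiring α] [LinearOrder α] [IsStrictOrderedRing α]
    [Archimedean α] [ExistsAddOfLE α] {x y : α} (hx : 1 ≤ x) (hy : 1 < y) :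
    ∃ k : ℕ, x ≤ y ^ k ∧ y ^ k ≤ y * x := by
  obtain ⟨n, hn, hn'⟩ := exists_nat_pow_near hx hy
  exact ⟨n + 1, hn'.le, by rw [pow_succ']; exact mul_le_mul_of_nonneg_left hn (by positivity)⟩

theorem inv_two_pow_two_mul_rpow (k : ℕ) (s : ℝ) :
    ((2 : ℝ) ^ (2 * k))⁻¹ ^ (s / 2) = (2 : ℝ) ^ (-(k : ℝ) * s) := by
  rw [← rpow_natCast, ← rpow_neg zero_le_two, ← rpow_mul zero_le_two]
  congr 1
  push_cast
  ring

theorem exists_two_pow_balanced {s t L : ℝ} (hs : 0 ≤ s) (ht : 0 < t) (htL : t ≤ L) :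
    ∃ k : ℕ, L ≤ t * 2 ^ (2 * k) ∧ (t / 4) ^ (s / 2) * L ^ (-(s / 2)) ≤ 2 ^ (-(k : ℝ) * s) := by
  have hL : 0 < L := ht.trans_le htL
  obtain ⟨k, hLk, hkL⟩ := exists_pow_mem_Icc ((one_le_div ht).2 htL) (by norm_num : (1 : ℝ) < 4)
  have h4 : (4 : ℝ) ^ k = 2 ^ (2 * k) := by rw [pow_mul]; norm_num
  rw [h4] at hLk hkL
  refine ⟨k, (div_le_iff₀' ht).1 hLk, ?_⟩
  have hquot : t / 4 / L ≤ ((2 : ℝ) ^ (2 * k))⁻¹ := by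
    rw [div_div, le_inv_comm₀ (by positivity) (by positivity), inv_div, mul_div_assoc]
    exact hkL
  calc (t / 4) ^ (s / 2) * L ^ (-(s / 2)) = (t / 4 / L) ^ (s / 2) := by
        rw [div_rpow (by positivity) hL.le, rpow_neg hL.le, ← div_eq_mul_inv]
    _ ≤ ((2 : ℝ) ^ (2 * k))⁻¹ ^ (s / 2) := rpow_le_rpow (by positivity) hquot (by positivity)
    _ = 2 ^ (-(k : ℝ) * s) := inv_two_pow_two_mul_rpow k s

theorem le_log_div_of_le_exp_neg_mul {t ϱ δ : ℝ} (hδ : 0 < δ) (hδϱ : δ ≤ exp (-t) * ϱ) :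
    t ≤ log (ϱ / δ) := by
  have hϱ : 0 < ϱ := pos_of_mul_pos_right (hδ.trans_le hδϱ) (exp_pos _).le
  rw [le_log_iff_exp_le (div_pos hϱ hδ), le_div_iff₀ hδ, ← le_div_iff₀' (exp_pos t)]
  simpa [div_eq_mul_inv, exp_neg, mul_comm] using hδϱ

/-- Balancing step in the proof of Theorem 5.2 (optimality for the backwards heat equation):
for `s, t̄ > 0` there is `c > 0` (depending only on `s` and `t̄`) such that for all `ϱ > 0` and
`0 < δ ≤ e^{−t̄} ϱ` some `k ∈ ℕ` satisfies
`min(2^{−ks} ϱ, e^{t̄ 2^{2k}} δ) ≥ c ϱ (ln(ϱ/δ))^{−s/2}`; in particular the supremum over `k`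
satisfies the same lower bound. -/
theorem stmt_16 (s tbar : ℝ) (hs : 0 < s) (htbar : 0 < tbar) :
    ∃ c : ℝ, 0 < c ∧ ∀ ϱ δ : ℝ, 0 < ϱ → 0 < δ → δ ≤ Real.exp (-tbar) * ϱ →
      (∃ k : ℕ, c * ϱ * Real.log (ϱ / δ) ^ (-(s / 2)) ≤
        min ((2 : ℝ) ^ (-(k : ℝ) * s) * ϱ) (Real.exp (tbar * 2 ^ (2 * k)) * δ)) ∧
      c * ϱ * Real.log (ϱ / δ) ^ (-(s / 2)) ≤
        ⨆ k : ℕ, min ((2 : ℝ) ^ (-(k : ℝ) * s) * ϱ) (Real.exp (tbar * 2 ^ (2 * k)) * δ) := by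
  refine ⟨(tbar / 4) ^ (s / 2), by positivity, fun ϱ δ hϱ hδ hδϱ => ?_⟩
  set L := log (ϱ / δ)
  have two_rpow_le_one (k : ℕ) : (2 : ℝ) ^ (-(k : ℝ) * s) ≤ 1 :=
    rpow_le_one_of_one_le_of_nonpos one_le_two (by nlinarith [k.cast_nonneg (α := ℝ)])
  obtain ⟨k, hLk, hk⟩ := exists_two_pow_balanced hs.le htbar (le_log_div_of_le_exp_neg_mul hδ hδϱ)
  have hϱ_eq : ϱ = exp L * δ := by rw [exp_log (div_pos hϱ hδ), div_mul_cancel₀ _ hδ.ne']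
  have hbound : (tbar / 4) ^ (s / 2) * ϱ * L ^ (-(s / 2)) ≤
      min ((2 : ℝ) ^ (-(k : ℝ) * s) * ϱ) (exp (tbar * 2 ^ (2 * k)) * δ) := by
    have hfirst : (tbar / 4) ^ (s / 2) * ϱ * L ^ (-(s / 2)) ≤ 2 ^ (-(k : ℝ) * s) * ϱ := by
      rw [mul_right_comm]; exact mul_le_mul_of_nonneg_right hk hϱ.le
    refine le_min hfirst (hfirst.trans ?_)
    calc (2 : ℝ) ^ (-(k : ℝ) * s) * ϱ ≤ ϱ := mul_le_of_le_one_left hϱ.le (two_rpow_le_one k)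
      _ = exp L * δ := hϱ_eq
      _ ≤ exp (tbar * 2 ^ (2 * k)) * δ := by gcongr
  have hbdd : BddAbove (Set.range fun k : ℕ =>
      min ((2 : ℝ) ^ (-(k : ℝ) * s) * ϱ) (exp (tbar * 2 ^ (2 * k)) * δ)) := by
    refine ⟨ϱ, ?_⟩
    rintro _ ⟨j, rfl⟩
    exact (min_le_left _ _).trans (mul_le_of_le_one_left hϱ.le (two_rpow_le_one j))
  exact ⟨⟨k, hbound⟩, hbound.trans (le_ciSup hbdd k)⟩
end
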